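/- Let p : ℝ^d → ℝ be a continuous density and suppose A and A' are δ-separated connected subsets of the support of p, i.e., setting λ = inf_{x ∈ A ∪ A'} p(x), the sets A and A' lie in distinct connected components of {x : p(x) > λ − δ}. Then there exists a split level λ* of p with λ* ≤ λ − δ such that A and A' belong to one connected component of {x : p(x) ≥ λ*} and to distinct connected components of {x : p(x) > λ*}. -/
import Mathlib


open Metric Set

/-- `A` and `A'` lie in one (common) connected component of `F`. -/
def sameComp {X : Type*} [TopologicalSpace X] (F A A' : Set X) : Prop :=
  ∃ x ∈ F, A ⊆ connectedComponentIn F x ∧ A' ⊆ connectedComponentIn F x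

/-- `A` and `A'` lie in distinct connected components of `F`. -/
def distinctComps {X : Type*} [TopologicalSpace X] (F A A' : Set X) : Prop :=
  A ⊆ F ∧ A' ⊆ F ∧ ∀ x ∈ A, ∀ y ∈ A', connectedComponentIn F x ≠ connectedComponentIn F y

/-- `l` is a split level of `p`: some connected component `C` of `{p ≥ l}` is such that
`C ∩ {p > l}` has two or more connected components. -/
def IsSplitLevel {X : Type*} [TopologicalSpace X] (p : X → ℝ) (l : ℝ) : Prop :=
  ∃ x ∈ {y | l ≤ p y},
    ∃ a ∈ connectedComponentIn {y | l ≤ p y} x ∩ {y | l < p y},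
      ∃ b ∈ connectedComponentIn {y | l ≤ p y} x ∩ {y | l < p y},
        connectedComponentIn (connectedComponentIn {y | l ≤ p y} x ∩ {y | l < p y}) a ≠
          connectedComponentIn (connectedComponentIn {y | l ≤ p y} x ∩ {y | l < p y}) b

/-- A connected component within a closed set is closed. -/
private lemma isClosed_connectedComponentIn' {X : Type*} [TopologicalSpace X] {F : Set X}
    {x : X} (hF : IsClosed F) : IsClosed (connectedComponentIn F x) := by
  by_cases hx : x ∈ F
  · have h1 : IsPreconnected (closure (connectedComponentIn F x)) :=
      isPreconnected_connectedComponentIn.closure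
    have h2 : closure (connectedComponentIn F x) ⊆ F :=
      hF.closure_subset_iff.2 (connectedComponentIn_subset F x)
    have h3 : closure (connectedComponentIn F x) ⊆ connectedComponentIn F x :=
      h1.subset_connectedComponentIn (subset_closure (mem_connectedComponentIn hx)) h2
    exact isClosed_of_closure_subset h3
  · rw [connectedComponentIn_eq_empty hx]; exact isClosed_empty

/-- A directed intersection of compact preconnected sets is preconnected. -/
private lemma isPreconnected_iInter_directed {X ι : Type*} [TopologicalSpace X] [T2Space X]
    [Nonempty ι] {C : ι → Set X} (hdir : Directed (· ⊇ ·) C) (hcomp : ∀ i, IsCompact (C i))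
    (hconn : ∀ i, IsPreconnected (C i)) : IsPreconnected (⋂ i, C i) := by
  set K := ⋂ i, C i with hKdef
  intro U V hU hV hKUV hKU hKV
  by_contra hcon
  rw [not_nonempty_iff_eq_empty] at hcon
  have hclosed : ∀ i, IsClosed (C i) := fun i => (hcomp i).isClosed
  have hKcl : IsClosed K := isClosed_iInter hclosed
  have hKsub : ∀ i, K ⊆ C i := fun i => iInter_subset _ i
  have hKcomp : IsCompact K :=
    (hcomp (Classical.arbitrary ι)).of_isClosed_subset hKcl (hKsub _)
  have hAcomp : IsCompact (K \ V) :=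
    hKcomp.of_isClosed_subset (hKcl.inter hV.isClosed_compl) diff_subset
  have hBcomp : IsCompact (K \ U) :=
    hKcomp.of_isClosed_subset (hKcl.inter hU.isClosed_compl) diff_subset
  have hdisj : Disjoint (K \ V) (K \ U) := by
    rw [Set.disjoint_left]
    rintro z ⟨hzK, hzV⟩ ⟨-, hzU⟩
    rcases hKUV hzK with h | h
    · exact hzU h
    · exact hzV h
  obtain ⟨U', V', hU'o, hV'o, hAU', hBV', hUV'⟩ :=
    SeparatedNhds.of_isCompact_isCompact_isClosed hAcomp hBcomp
      (hKcl.inter hU.isClosed_compl) hdisj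
  have hKW : K ⊆ U' ∪ V' := by
    intro z hz
    rcases hKUV hz with h | h
    · have : z ∉ V := by
        intro hzV
        have : z ∈ K ∩ (U ∩ V) := ⟨hz, h, hzV⟩
        rw [hcon] at this; exact this
      exact Or.inl (hAU' ⟨hz, this⟩)
    · by_cases hzU : z ∈ U
      · have : z ∉ V := by
          intro hzV
          have : z ∈ K ∩ (U ∩ V) := ⟨hz, hzU, hzV⟩
          rw [hcon] at this; exact this
        exact Or.inl (hAU' ⟨hz, this⟩)
      · exact Or.inr (hBV' ⟨hz, hzU⟩)
  have hexist : ∃ i, C i ⊆ U' ∪ V' := by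
    by_contra hno
    push_neg at hno
    have hne : ∀ i, (C i \ (U' ∪ V')).Nonempty := by
      intro i
      obtain ⟨z, hz1, hz2⟩ := not_subset.mp (hno i)
      exact ⟨z, hz1, hz2⟩
    have hdir' : Directed (· ⊇ ·) (fun i => C i \ (U' ∪ V')) := by
      intro i j
      obtain ⟨k, hk1, hk2⟩ := hdir i j
      exact ⟨k, diff_subset_diff_left hk1, diff_subset_diff_left hk2⟩
    have := IsCompact.nonempty_iInter_of_directed_nonempty_isCompact_isClosed
      (fun i => C i \ (U' ∪ V')) hdir' hne
      (fun i => (hcomp i).of_isClosed_subset ((hclosed i).inter (hU'o.union hV'o).isClosed_compl)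
        diff_subset)
      (fun i => (hclosed i).inter (hU'o.union hV'o).isClosed_compl)
    obtain ⟨z, hz⟩ := this
    simp only [mem_iInter, mem_diff] at hz
    have hzK : z ∈ K := mem_iInter.mpr fun i => (hz i).1
    exact (hz (Classical.arbitrary ι)).2 (hKW hzK)
  obtain ⟨i, hCi⟩ := hexist
  obtain ⟨xu, hxuK, hxuU⟩ := hKU
  obtain ⟨xv, hxvK, hxvV⟩ := hKV
  have hxu' : xu ∈ C i ∩ U' := by
    refine ⟨hKsub i hxuK, hAU' ⟨hxuK, ?_⟩⟩
    intro hxuV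
    have : xu ∈ K ∩ (U ∩ V) := ⟨hxuK, hxuU, hxuV⟩
    rw [hcon] at this; exact this
  have hxv' : xv ∈ C i ∩ V' := by
    refine ⟨hKsub i hxvK, hBV' ⟨hxvK, ?_⟩⟩
    intro hxvU
    have : xv ∈ K ∩ (U ∩ V) := ⟨hxvK, hxvU, hxvV⟩
    rw [hcon] at this; exact this
  obtain ⟨z, _, hz2⟩ := hconn i U' V' hU'o hV'o hCi ⟨xu, hxu'⟩ ⟨xv, hxv'⟩
  exact (Set.disjoint_left.mp hUV' hz2.1) hz2.2

theorem stmt2 (d : ℕ) (p : EuclideanSpace ℝ (Fin d) → ℝ)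
    (hp : Continuous p) (hsupp : HasCompactSupport p) (hp0 : ∀ x, 0 ≤ p x)
    (A A' : Set (EuclideanSpace ℝ (Fin d))) (hA : A.Nonempty) (hA' : A'.Nonempty)
    (hAc : IsConnected A) (hA'c : IsConnected A')
    (hAsupp : A ⊆ Function.support p) (hA'supp : A' ⊆ Function.support p)
    (δ : ℝ) (hδ : 0 < δ)
    (hsep : distinctComps {x | sInf (p '' (A ∪ A')) - δ < p x} A A') :
    ∃ l : ℝ, l ≤ sInf (p '' (A ∪ A')) - δ ∧ IsSplitLevel p l ∧
      sameComp {x | l ≤ p x} A A' ∧ distinctComps {x | l < p x} A A' := by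
  obtain ⟨a, haA⟩ := hA
  obtain ⟨a', haA'⟩ := hA'
  set lam := sInf (p '' (A ∪ A')) with hlamdef
  have hbdd : BddBelow (p '' (A ∪ A')) := ⟨0, by rintro y ⟨x, -, rfl⟩; exact hp0 x⟩
  have hlamle : ∀ x ∈ A ∪ A', lam ≤ p x := fun x hx => csInf_le hbdd ⟨x, hx, rfl⟩
  have hpa : lam ≤ p a := hlamle a (Or.inl haA)
  have hpa' : lam ≤ p a' := hlamle a' (Or.inr haA')
  -- the set of levels at which a and a' are in the same component of the superlevel set
  set S := {l : ℝ | a' ∈ connectedComponentIn {x | l ≤ p x} a} with hSdef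
  have hS0 : (0 : ℝ) ∈ S := by
    have huniv : {x : EuclideanSpace ℝ (Fin d) | (0:ℝ) ≤ p x} = univ :=
      eq_univ_of_forall fun x => hp0 x
    show a' ∈ connectedComponentIn {x | (0:ℝ) ≤ p x} a
    rw [huniv]
    exact isPreconnected_univ.subset_connectedComponentIn (mem_univ a) (subset_refl _)
      (mem_univ a')
  have hmono : ∀ {l l' : ℝ}, l' ≤ l → l ∈ S → l' ∈ S := by
    intro l l' hll hl
    exact connectedComponentIn_mono a (fun x hx => le_trans hll hx) hl
  obtain ⟨hAsub, hA'sub, hsepcomp⟩ := hsep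
  have hub : ∀ l ∈ S, l ≤ lam - δ := by
    intro l hl
    by_contra hlt
    push_neg at hlt
    have h1 : connectedComponentIn {x | l ≤ p x} a ⊆
        connectedComponentIn {x | lam - δ < p x} a :=
      connectedComponentIn_mono a (fun x hx => lt_of_lt_of_le hlt hx)
    exact hsepcomp a haA a' haA' (connectedComponentIn_eq (h1 hl))
  have hSne : S.Nonempty := ⟨0, hS0⟩
  have hSbdd : BddAbove S := ⟨lam - δ, hub⟩
  set l0 := sSup S with hl0def
  have hl0le : l0 ≤ lam - δ := csSup_le hSne hub
  have hl0nonneg : (0 : ℝ) ≤ l0 := le_csSup hSbdd hS0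
  have hl0lam : l0 < lam := lt_of_le_of_lt hl0le (by linarith)
  have hpclosed : ∀ l : ℝ, IsClosed {x : EuclideanSpace ℝ (Fin d) | l ≤ p x} :=
    fun l => isClosed_le continuous_const hp
  -- key step: l0 ∈ S
  have hl0S : l0 ∈ S := by
    rcases eq_or_lt_of_le hl0nonneg with h0 | h0
    · rw [← h0]; exact hS0
    · -- l0 > 0 : use the directed intersection of compact connected components
      have hIne : Nonempty ↥(Ioo (0:ℝ) l0) := ⟨⟨l0/2, by constructor <;> linarith⟩⟩
      set C : ↥(Ioo (0:ℝ) l0) → Set (EuclideanSpace ℝ (Fin d)) :=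
        fun l => connectedComponentIn {x | (l : ℝ) ≤ p x} a with hCdef
      have hmemF : ∀ l : ↥(Ioo (0:ℝ) l0), a ∈ {x | (l : ℝ) ≤ p x} :=
        fun l => le_of_lt (lt_of_lt_of_le (lt_trans l.2.2 hl0lam) hpa)
      have haC : ∀ l, a ∈ C l := fun l => mem_connectedComponentIn (hmemF l)
      have ha'C : ∀ l, a' ∈ C l := by
        intro l
        have : (l : ℝ) ∈ S := by
          obtain ⟨s, hsS, hls⟩ := exists_lt_of_lt_csSup hSne l.2.2
          exact hmono (le_of_lt hls) hsS
        exact this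
      have hCcomp : ∀ l, IsCompact (C l) := by
        intro l
        refine hsupp.isCompact.of_isClosed_subset
          (isClosed_connectedComponentIn' (hpclosed l)) ?_
        refine (connectedComponentIn_subset _ _).trans ?_
        intro x hx
        have : p x ≠ 0 := by
          have := lt_of_lt_of_le l.2.1 hx
          linarith
        exact subset_tsupport p this
      have hCconn : ∀ l, IsPreconnected (C l) := fun l => isPreconnected_connectedComponentIn
      have hdir : Directed (· ⊇ ·) C := by
        intro i j
        rcases le_total (i : ℝ) (j : ℝ) with h | h
        · exact ⟨j, connectedComponentIn_mono a (fun x hx => le_trans h hx), subset_refl _⟩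
        · exact ⟨i, subset_refl _, connectedComponentIn_mono a (fun x hx => le_trans h hx)⟩
      have hKconn : IsPreconnected (⋂ l, C l) :=
        isPreconnected_iInter_directed hdir hCcomp hCconn
      have haK : a ∈ ⋂ l, C l := mem_iInter.mpr haC
      have ha'K : a' ∈ ⋂ l, C l := mem_iInter.mpr ha'C
      have hKsub : (⋂ l, C l) ⊆ {x | l0 ≤ p x} := by
        intro x hx
        simp only [mem_iInter] at hx
        show l0 ≤ p x
        by_contra hcon
        push_neg at hcon
        have hpx0 : (0 : ℝ) ≤ p x := hp0 x
        set c : ℝ := (p x + l0) / 2 with hcdef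
        have hc : c ∈ Ioo (0:ℝ) l0 := ⟨by positivity, by rw [hcdef]; linarith⟩
        have := connectedComponentIn_subset {y | ((⟨c, hc⟩ : ↥(Ioo (0:ℝ) l0)) : ℝ) ≤ p y} a
          (hx ⟨c, hc⟩)
        have h2 : c ≤ p x := this
        rw [hcdef] at h2
        linarith
      exact hKconn.subset_connectedComponentIn haK hKsub ha'K
  -- now the superlevel set strictly above l0 separates a and a'
  set O := {x : EuclideanSpace ℝ (Fin d) | l0 < p x} with hOdef
  have hOopen : IsOpen O := isOpen_lt continuous_const hp
  have haO : a ∈ O := lt_of_lt_of_le hl0lam hpa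
  have ha'O : a' ∈ O := lt_of_lt_of_le hl0lam hpa'
  have hneq : connectedComponentIn O a ≠ connectedComponentIn O a' := by
    intro heq
    have ha'mem : a' ∈ connectedComponentIn O a := heq ▸ mem_connectedComponentIn ha'O
    have hUopen : IsOpen (connectedComponentIn O a) := hOopen.connectedComponentIn
    have hUconn : IsConnected (connectedComponentIn O a) :=
      isConnected_connectedComponentIn_iff.mpr haO
    have hpath : IsPathConnected (connectedComponentIn O a) :=
      (hUopen.isConnected_iff_isPathConnected).mp hUconn
    obtain ⟨γ, hγ⟩ := hpath.joinedIn a (mem_connectedComponentIn haO) a' ha'mem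
    have hrcomp : IsCompact (range γ) := isCompact_range γ.continuous
    have harange : a ∈ range γ := ⟨0, γ.source⟩
    have ha'range : a' ∈ range γ := ⟨1, γ.target⟩
    obtain ⟨x0, hx0mem, hx0min⟩ := hrcomp.exists_isMinOn ⟨a, harange⟩ hp.continuousOn
    have hm : l0 < p x0 := by
      obtain ⟨t, ht⟩ := hx0mem
      have := connectedComponentIn_subset O a (hγ t)
      rw [ht] at this
      exact this
    have hmS : p x0 ∈ S := by
      have hsub : range γ ⊆ {x | p x0 ≤ p x} := fun y hy => hx0min hy
      have hrconn : IsPreconnected (range γ) := isPreconnected_range γ.continuous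
      exact hrconn.subset_connectedComponentIn harange hsub ha'range
    have := le_csSup hSbdd hmS
    linarith
  have haO2 : l0 < p a := haO
  have haF : a ∈ {y : EuclideanSpace ℝ (Fin d) | l0 ≤ p y} := le_of_lt haO2
  refine ⟨l0, hl0le, ?_, ?_, ?_⟩
  · -- IsSplitLevel
    refine ⟨a, haF, a, ⟨mem_connectedComponentIn haF, haO⟩,
      a', ⟨hl0S, ha'O⟩, ?_⟩
    intro heq
    have h1 : a' ∈ connectedComponentIn
        (connectedComponentIn {y | l0 ≤ p y} a ∩ {y | l0 < p y}) a :=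
      heq ▸ mem_connectedComponentIn ⟨hl0S, ha'O⟩
    have h2 : connectedComponentIn
        (connectedComponentIn {y | l0 ≤ p y} a ∩ {y | l0 < p y}) a ⊆
        connectedComponentIn O a :=
      connectedComponentIn_mono a inter_subset_right
    exact hneq (connectedComponentIn_eq (h2 h1))
  · -- sameComp
    have hAF : A ⊆ {x | l0 ≤ p x} := fun x hx =>
      le_of_lt (lt_of_lt_of_le hl0lam (hlamle x (Or.inl hx)))
    have hA'F : A' ⊆ {x | l0 ≤ p x} := fun x hx =>
      le_of_lt (lt_of_lt_of_le hl0lam (hlamle x (Or.inr hx)))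
    refine ⟨a, haF, hAc.isPreconnected.subset_connectedComponentIn haA hAF, ?_⟩
    have heq : connectedComponentIn {x | l0 ≤ p x} a =
        connectedComponentIn {x | l0 ≤ p x} a' := connectedComponentIn_eq hl0S
    rw [heq]
    exact hA'c.isPreconnected.subset_connectedComponentIn haA' hA'F
  · -- distinctComps
    have hAO : A ⊆ O := fun x hx => lt_of_lt_of_le hl0lam (hlamle x (Or.inl hx))
    have hA'O : A' ⊆ O := fun x hx => lt_of_lt_of_le hl0lam (hlamle x (Or.inr hx))
    refine ⟨hAO, hA'O, ?_⟩
    intro x hx y hy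
    have hxa : connectedComponentIn O x = connectedComponentIn O a := by
      have : x ∈ connectedComponentIn O a :=
        hAc.isPreconnected.subset_connectedComponentIn haA hAO hx
      exact (connectedComponentIn_eq this).symm
    have hya' : connectedComponentIn O y = connectedComponentIn O a' := by
      have : y ∈ connectedComponentIn O a' :=
        hA'c.isPreconnected.subset_connectedComponentIn haA' hA'O hy
      exact (connectedComponentIn_eq this).symm
    rw [hxa, hya']
    exact hneq
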